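/- Let k be a field, 𝔥 an abelian Lie algebra over k, and M an 𝔥-module that is the direct sum of its 𝔥-weight spaces. Fix a linear functional μ : 𝔥 → k and a natural number 𝔟 such that the weight space M^μ has k-dimension at most 𝔟. Suppose (M_i)_{i≥1} and (N_i)_{i≥1} are 𝔥-submodules of M forming an infinite chain ⋯ ⊆ N₂ ⊊ M₂ ⊆ N₁ ⊊ M₁ ⊆ M, i.e. N_i is a proper submodule of M_i and M_{i+1} ⊆ N_i for every i ≥ 1. Then the set of indices i ≥ 1 for which the μ-weight space of the quotient module M_i/N_i is nonzero has at most 𝔟 + 1 elements. -/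

import Mathlib

/-! Because `H` is abelian and `M` is spanned by weight vectors, a `μ`-weight vector of `M / N`,
for any `H`-submodule `N`, lifts to a `μ`-weight vector of `M`: write the lift as a finite sum of
weight vectors and remove the components of weight `ν ≠ μ` one at a time with `⁅h, ·⁆ - ν h`,
where `ν h ≠ μ h`. Hence every counted index `i` has a vector of `M^μ` lying in `M_i` but not in
`N_i ⊇ M_j` for `j > i`, so the subspaces `M_i ∩ M^μ` strictly decrease along the counted indices
and are nonzero; there are at most `dim M^μ ≤ b` of them. -/

variable (k : Type*) [Field k] (H : Type*) [LieRing H] [LieAlgebra k H]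
  (M : Type*) [AddCommGroup M] [Module k M] [LieRingModule H M] [LieModule k H M]

/-- The `μ`-weight space of the `H`-module `M`:
`M^μ = {v ∈ M : h • v = μ(h) • v for all h ∈ H}`. -/
def weightSpace (μ : H →ₗ[k] k) : Submodule k M where
  carrier := {v | ∀ h : H, ⁅h, v⁆ = μ h • v}
  add_mem' := by
    intro a b ha hb h
    rw [lie_add, ha h, hb h, smul_add]
  zero_mem' := by
    intro h
    rw [lie_zero, smul_zero]
  smul_mem' := by
    intro c v hv h
    rw [lie_smul, hv h, smul_comm]

section WeightVectors

variable {k : Type*} [Field k] {H : Type*} [LieRing H] [LieAlgebra k H]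
  {M : Type*} [AddCommGroup M] [Module k M] [LieRingModule H M] [LieModule k H M]

theorem lie_lie_comm [IsLieAbelian H] (h h' : H) (v : M) : ⁅h, ⁅h', v⁆⁆ = ⁅h', ⁅h, v⁆⁆ := by
  have := lie_lie h h' v
  rwa [trivial_lie_zero H H, zero_lie, eq_comm, sub_eq_zero] at this

theorem exists_mem_weightSpace_sub_mem_of_sum [IsLieAbelian H] (N : LieSubmodule k H M)
    (μ : H →ₗ[k] k) (s : Finset (H →ₗ[k] k)) (v : (H →ₗ[k] k) → M)
    (hv : ∀ χ, v χ ∈ weightSpace k H M χ)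
    (hx : ∀ h : H, ⁅h, ∑ χ ∈ s, v χ⁆ - μ h • ∑ χ ∈ s, v χ ∈ N) :
    ∃ u ∈ weightSpace k H M μ, ∑ χ ∈ s, v χ - u ∈ N := by
  classical
  induction s using Finset.induction_on generalizing v with
  | empty => exact ⟨0, zero_mem _, by simp⟩
  | insert ν s hν ih =>
    rw [Finset.sum_insert hν] at hx ⊢
    set y := ∑ χ ∈ s, v χ
    by_cases hνμ : ν = μ
    · subst hνμ
      have hy : ∀ h : H, ⁅h, y⁆ - ν h • y ∈ N := fun h => by
        simpa [lie_add, hv ν h, smul_add] using hx h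
      obtain ⟨u, hu, hyu⟩ := ih v hv hy
      exact ⟨v ν + u, add_mem (hv ν) hu, by rwa [add_sub_add_left_eq_sub]⟩
    · set x := v ν + y
      obtain ⟨h₀, hh₀⟩ : ∃ h₀, ν h₀ ≠ μ h₀ := by
        by_contra! h
        exact hνμ (LinearMap.ext h)
      -- `⁅h₀, ·⁆ - ν h₀` kills the `ν`-component and commutes with `⁅h, ·⁆ - μ h`
      have hsum : ∑ χ ∈ s, (χ h₀ - ν h₀) • v χ = ⁅h₀, x⁆ - ν h₀ • x := by
        simp only [x, y, lie_add, lie_sum, hv ν h₀, smul_add, Finset.smul_sum, sub_smul,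
          Finset.sum_sub_distrib, hv _ h₀]
        abel
      have hw (h : H) : ⁅h, ∑ χ ∈ s, (χ h₀ - ν h₀) • v χ⁆ - μ h • ∑ χ ∈ s, (χ h₀ - ν h₀) • v χ
          = ⁅h₀, ⁅h, x⁆ - μ h • x⁆ - ν h₀ • (⁅h, x⁆ - μ h • x) := by
        rw [hsum, lie_sub, lie_smul, lie_sub, lie_smul, lie_lie_comm]
        module
      obtain ⟨u, hu, hsu⟩ := ih _ (fun χ => (weightSpace k H M χ).smul_mem _ (hv χ))
        fun h => hw h ▸ N.sub_mem (N.lie_mem (hx h)) (N.smul_mem _ (hx h))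
      have hc : μ h₀ - ν h₀ ≠ 0 := sub_ne_zero.mpr hh₀.symm
      refine ⟨(μ h₀ - ν h₀)⁻¹ • u, Submodule.smul_mem _ _ hu, ?_⟩
      have hxu : x - (μ h₀ - ν h₀)⁻¹ • u =
          (μ h₀ - ν h₀)⁻¹ • ((∑ χ ∈ s, (χ h₀ - ν h₀) • v χ - u) - (⁅h₀, x⁆ - μ h₀ • x)) := by
        rw [hsum, show ⁅h₀, x⁆ - ν h₀ • x - u - (⁅h₀, x⁆ - μ h₀ • x) = (μ h₀ - ν h₀) • x - u by
          module, smul_sub, smul_smul, inv_mul_cancel₀ hc, one_smul]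
      rw [hxu]
      exact N.smul_mem _ (N.sub_mem hsu (hx h₀))

theorem exists_mem_weightSpace_sub_mem [IsLieAbelian H]
    (hM : ⨆ χ : H →ₗ[k] k, weightSpace k H M χ = ⊤) (N : LieSubmodule k H M) (μ : H →ₗ[k] k)
    {x : M} (hx : ∀ h : H, ⁅h, x⁆ - μ h • x ∈ N) :
    ∃ u ∈ weightSpace k H M μ, x - u ∈ N := by
  obtain ⟨f, hf, rfl⟩ := (Submodule.mem_iSup_iff_exists_finsupp _ x).mp (hM ▸ Submodule.mem_top)
  exact exists_mem_weightSpace_sub_mem_of_sum N μ f.support f hf hx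

theorem exists_mem_weightSpace_mem_notMem [IsLieAbelian H]
    (hM : ⨆ χ : H →ₗ[k] k, weightSpace k H M χ = ⊤) {N L : LieSubmodule k H M} (hNL : N ≤ L)
    {μ : H →ₗ[k] k} {v : M} (hv : v ∈ L) (hvN : v ∉ N) (hμ : ∀ h : H, ⁅h, v⁆ - μ h • v ∈ N) :
    ∃ u ∈ weightSpace k H M μ, u ∈ L ∧ u ∉ N := by
  obtain ⟨u, hu, hvu⟩ := exists_mem_weightSpace_sub_mem hM N μ hμ
  refine ⟨u, hu, by simpa using L.sub_mem hv (hNL hvu), fun huN => hvN ?_⟩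
  simpa using N.add_mem hvu huN

end WeightVectors

theorem le_of_interlaced {α : Type*} [Preorder α] {A B : ℕ → α}
    (hBA : ∀ i, 1 ≤ i → B i ≤ A i) (hAB : ∀ i, 1 ≤ i → A (i + 1) ≤ B i)
    {i j : ℕ} (hi : 1 ≤ i) (hij : i < j) : A j ≤ B i := by
  induction j, hij using Nat.le_induction with
  | base => exact hAB i hi
  | succ j hij ih => exact (hAB j (by omega)).trans ((hBA j (by omega)).trans ih)

theorem encard_le_finrank_of_strictAntiOn {K V ι : Type*} [DivisionRing K] [AddCommGroup V]
    [Module K V] [FiniteDimensional K V] [LinearOrder ι] {W : ι → Submodule K V} {S : Set ι}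
    (hW : StrictAntiOn W S) (hne : ∀ i ∈ S, W i ≠ ⊥) :
    S.encard ≤ Module.finrank K V := by
  have hmaps : Set.MapsTo (fun i => Module.finrank K (W i)) S (Set.Icc 1 (Module.finrank K V)) :=
    fun i hi => ⟨Submodule.one_le_finrank_iff.mpr (hne i hi), Submodule.finrank_le _⟩
  refine (Set.encard_le_encard_of_injOn hmaps
    (Submodule.finrank_strictMono.comp_strictAntiOn hW).injOn).trans ?_
  rw [← Finset.coe_Icc, Set.encard_coe_eq_coe_finsetCard, Nat.card_Icc, Nat.add_sub_cancel]

theorem stmt_0 [IsLieAbelian H] [DecidableEq (H →ₗ[k] k)]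
    (hM : DirectSum.IsInternal fun μ : H →ₗ[k] k => weightSpace k H M μ)
    (μ : H →ₗ[k] k) (b : ℕ)
    (hb : Module.rank k (weightSpace k H M μ) ≤ b)
    (Mseq Nseq : ℕ → LieSubmodule k H M)
    (hlt : ∀ i, 1 ≤ i → Nseq i < Mseq i)
    (hchain : ∀ i, 1 ≤ i → Mseq (i + 1) ≤ Nseq i) :
    {i : ℕ | 1 ≤ i ∧ ∃ v ∈ Mseq i, v ∉ Nseq i ∧
        ∀ h : H, ⁅h, v⁆ - μ h • v ∈ Nseq i}.encard ≤ (b : ℕ∞) + 1 := by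
  set S := {i : ℕ | 1 ≤ i ∧ ∃ v ∈ Mseq i, v ∉ Nseq i ∧ ∀ h : H, ⁅h, v⁆ - μ h • v ∈ Nseq i}
  set W := weightSpace k H M μ
  have : FiniteDimensional k W :=
    Module.rank_lt_aleph0_iff.mp (hb.trans_lt Cardinal.natCast_lt_aleph0)
  let V (i : ℕ) : Submodule k W := (Mseq i).toSubmodule.comap W.subtype
  have hwit : ∀ i ∈ S, ∃ u ∈ V i, (u : M) ∉ Nseq i := by
    rintro i ⟨hi, v, hv, hvN, hvμ⟩
    obtain ⟨u, huW, hu, huN⟩ :=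
      exists_mem_weightSpace_mem_notMem hM.submodule_iSup_eq_top (hlt i hi).le hv hvN hvμ
    exact ⟨⟨u, huW⟩, hu, huN⟩
  have hV : StrictAntiOn V S := by
    intro i hi j _ hij
    obtain ⟨u, hu, huN⟩ := hwit i hi
    have hji := le_of_interlaced (fun i hi => (hlt i hi).le) hchain hi.1 hij
    exact lt_of_le_not_ge (Submodule.comap_mono (hji.trans (hlt i hi.1).le))
      fun h => huN (hji (h hu))
  calc _ ≤ (Module.finrank k W : ℕ∞) := encard_le_finrank_of_strictAntiOn hV fun i hi => by
        obtain ⟨u, hu, huN⟩ := hwit i hi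
        exact (Submodule.ne_bot_iff _).mpr ⟨u, hu, fun h0 => huN (by simp [h0])⟩
    _ ≤ b := by exact_mod_cast Module.finrank_le_of_rank_le hb
    _ ≤ b + 1 := le_self_add
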